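/- Let B be a standard Brownian motion, σ > 0, γ ∈ (0,1), ξ_n := (σ B_{n^{−γ}} − σ B_{(n+1)^{−γ}})⁺, and α ∈ (0,1). Then almost surely ∑_{n=1}^∞ exp(−α ∑_{k=1}^n ξ_k) < ∞, and consequently, setting H_n := ∏_{k=1}^n (1 + (2/3) ξ_k)⁻¹ (corresponding to α = 1/2, β = 2/3), almost surely ∑_{n=1}^∞ H_n < ∞ and H_n < ∑_{k=n+1}^∞ H_k ξ_k for every n ≥ 1. -/

import Mathlib

open MeasureTheory ProbabilityTheory

/-- `B` is a standard Brownian motion under `μ`: continuous paths, `B 0 = 0` a.s.,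
Gaussian increments with the correct variance, and independent increments. -/
structure IsBrownianMotion {Ω : Type*} [MeasurableSpace Ω] (μ : Measure Ω)
    (B : ℝ → Ω → ℝ) : Prop where
  isProb : IsProbabilityMeasure μ
  init : ∀ᵐ ω ∂μ, B 0 ω = 0
  cont : ∀ ω, Continuous fun t => B t ω
  meas : ∀ t, Measurable (B t)
  incr : ∀ s t : ℝ, 0 ≤ s → s ≤ t →
    Measure.map (fun ω => B t ω - B s ω) μ = gaussianReal 0 ((t - s).toNNReal)
  indep : ∀ (n : ℕ) (t : ℕ → ℝ), StrictMono t → 0 ≤ t 0 →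
    iIndepFun
      (fun i : Fin n => fun ω => B (t (i + 1)) ω - B (t i) ω) μ


/-!
Write `S n = ξ 1 + ⋯ + ξ n`. The increments of `B` over the disjoint intervals
`[(k + 1)^(-γ), k^(-γ)]` are independent centred Gaussians of variance `v k ≥ γ (k + 1)^(-(1 + γ))`,
and a Gaussian of variance `v ≤ 1` satisfies `E exp (-α (σ X)⁺) ≤ 1 - κ √v`. Hence
`E exp (-α S n) ≤ exp (-c n^((1 - γ) / 2))`, which is summable, so `∑ exp (-α S n) < ∞` almost
surely.

Pathwise, `ξ n → 0` by continuity of `B` at `0`, so eventually `(1 + 2 ξ k / 3)⁻¹ ≤ exp (-ξ k / 2)`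
and `H n ≤ C exp (-S n / 2)` is summable. In particular `H n → 0`, and telescoping
`H (k - 1) - H k = 2/3 H k ξ k` gives `∑_{k > n} H k ξ k = 3/2 H n > H n`.
-/

open Filter Topology Asymptotics
open scoped NNReal

lemma inv_one_add_two_thirds_mul_le_exp {x : ℝ} (hx0 : 0 ≤ x) (hx : x ≤ 1 / 2) :
    (1 + 2 / 3 * x)⁻¹ ≤ Real.exp (-(1 / 2 * x)) := by
  have hexp : Real.exp (1 / 2 * x) ≤ (1 - 1 / 2 * x)⁻¹ :=
    Real.exp_bound_div_one_sub_of_interval (by positivity) (by linarith) |>.trans_eq (one_div _)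
  rw [Real.exp_neg]
  refine inv_anti₀ (by positivity) (hexp.trans ?_)
  rw [inv_le_iff_one_le_mul₀ (by linarith)]
  nlinarith

lemma summable_prod_Icc_of_eventually_le_exp {a g : ℕ → ℝ} {c : ℝ} (ha : ∀ k, 0 ≤ a k)
    (hag : ∀ᶠ k in atTop, a k ≤ Real.exp (-(c * g k)))
    (hsum : Summable fun n => Real.exp (-c * ∑ k ∈ Finset.Icc 1 (n + 1), g k)) :
    Summable fun n => ∏ k ∈ Finset.Icc 1 (n + 1), a k := by
  obtain ⟨N, hN⟩ := eventually_atTop.1 hag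
  set C := (∏ k ∈ Finset.Icc 1 N, a k) * Real.exp (c * ∑ k ∈ Finset.Icc 1 N, g k)
  refine .of_norm_bounded_eventually_nat (hsum.mul_left C) ?_
  filter_upwards [eventually_ge_atTop N] with n hn
  have hprod := Finset.prod_Ioc_consecutive a (Nat.zero_le N) (by omega : N ≤ n + 1)
  have hsum := Finset.sum_Ioc_consecutive g (Nat.zero_le N) (by omega : N ≤ n + 1)
  simp only [← Finset.Icc_add_one_left_eq_Ioc 0, zero_add] at hprod hsum
  rw [Real.norm_of_nonneg (Finset.prod_nonneg fun k _ => ha k), ← hprod, ← hsum]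
  calc (∏ k ∈ Finset.Icc 1 N, a k) * ∏ k ∈ Finset.Ioc N (n + 1), a k
      ≤ (∏ k ∈ Finset.Icc 1 N, a k) * ∏ k ∈ Finset.Ioc N (n + 1), Real.exp (-(c * g k)) :=
        mul_le_mul_of_nonneg_left
          (Finset.prod_le_prod (fun k _ => ha k) fun k hk => hN k (Finset.mem_Ioc.1 hk).1.le)
          (Finset.prod_nonneg fun k _ => ha k)
    _ = C * Real.exp (-c * (∑ k ∈ Finset.Icc 1 N, g k + ∑ k ∈ Finset.Ioc N (n + 1), g k)) := by
        rw [← Real.exp_sum, mul_assoc, ← Real.exp_add, Finset.sum_neg_distrib, ← Finset.mul_sum]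
        ring_nf

lemma Antitone.hasSum_sub_succ {f : ℕ → ℝ} (hf : Antitone f) {l : ℝ}
    (hl : Tendsto f atTop (𝓝 l)) : HasSum (fun k => f k - f (k + 1)) (f 0 - l) := by
  refine (hasSum_iff_tendsto_nat_of_nonneg (fun k => sub_nonneg.2 (hf k.le_succ)) _).2 ?_
  simp_rw [Finset.sum_range_sub']
  exact tendsto_const_nhds.sub hl

theorem summable_and_lt_tsum_of_summable_exp {g H : ℕ → ℝ} (hg : ∀ k, 0 ≤ g k)
    (hg0 : Tendsto g atTop (𝓝 0))
    (hsum : Summable fun n => Real.exp (-(1 / 2) * ∑ k ∈ Finset.Icc 1 (n + 1), g k))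
    (hH : ∀ n, H n = ∏ k ∈ Finset.Icc 1 n, (1 + 2 / 3 * g k)⁻¹) :
    (Summable fun n => H (n + 1)) ∧ ∀ n, H n < ∑' k, H (k + (n + 1)) * g (k + (n + 1)) := by
  have hfac : ∀ k, 0 < 1 + 2 / 3 * g k := fun k => by linarith [hg k]
  have hHpos : ∀ n, 0 < H n := fun n => (hH n).symm ▸ Finset.prod_pos fun k _ => inv_pos.2 (hfac k)
  have hstep : ∀ m, H m - H (m + 1) = 2 / 3 * (H (m + 1) * g (m + 1)) := fun m => by
    have : H m = H (m + 1) * (1 + 2 / 3 * g (m + 1)) := by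
      rw [hH, hH, Finset.prod_Icc_succ_top (by omega), inv_mul_cancel_right₀ (hfac _).ne']
    rw [this]; ring
  have hHsum : Summable fun n => H (n + 1) := by
    simp_rw [hH]
    refine summable_prod_Icc_of_eventually_le_exp (fun k => (inv_pos.2 (hfac k)).le) ?_ hsum
    filter_upwards [hg0.eventually (ge_mem_nhds (by norm_num : (0 : ℝ) < 1 / 2))] with k hk
    exact inv_one_add_two_thirds_mul_le_exp (hg k) hk
  have hanti : Antitone H := antitone_nat_of_succ_le fun m => by
    linarith [hstep m, mul_nonneg (hHpos (m + 1)).le (hg (m + 1))]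
  have hH0 : Tendsto H atTop (𝓝 0) := (tendsto_add_atTop_iff_nat 1).1 hHsum.tendsto_atTop_zero
  refine ⟨hHsum, fun n => ?_⟩
  have htel := (hanti.comp_monotone (fun _ _ h => Nat.add_le_add_right h n)) |>.hasSum_sub_succ
    (hH0.comp (tendsto_add_atTop_nat n))
  have hHg : HasSum (fun k => H (k + (n + 1)) * g (k + (n + 1))) (3 / 2 * H n) := by
    have hterm : ∀ k, H (k + (n + 1)) * g (k + (n + 1)) = 3 / 2 * (H (k + n) - H (k + 1 + n)) :=
      fun k => by rw [add_right_comm k 1 n, hstep, add_assoc]; ring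
    simp_rw [hterm]
    simpa using htel.mul_left (3 / 2)
  rw [hHg.tsum_eq]
  linarith [hHpos n]

lemma exp_neg_le_one_sub_min_div_two {t : ℝ} (ht : 0 ≤ t) :
    Real.exp (-t) ≤ 1 - min t 1 / 2 := by
  set s := min t 1
  have hs0 : 0 ≤ s := le_min ht zero_le_one
  have hs1 : s ≤ 1 := min_le_right _ _
  calc Real.exp (-t) ≤ Real.exp (-s) := Real.exp_le_exp.2 (neg_le_neg (min_le_left _ _))
    _ ≤ (1 + s)⁻¹ := by
        rw [Real.exp_neg]
        exact inv_anti₀ (by positivity) (by linarith [Real.add_one_le_exp s])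
    _ ≤ 1 - s / 2 := by
        rw [inv_le_iff_one_le_mul₀ (by positivity)]
        nlinarith

lemma exp_neg_mul_max_le_one_sub_indicator {α σ c : ℝ} (hα : 0 < α) (hσ : 0 < σ) (hc0 : 0 ≤ c)
    (hc1 : c ≤ 1) (z : ℝ) :
    Real.exp (-α * max (σ * (c * z)) 0)
      ≤ 1 - (Set.Ici 1).indicator (fun _ => min (α * σ) 1 / 2 * c) z := by
  by_cases hz : (1 : ℝ) ≤ z
  · rw [Set.indicator_of_mem (Set.mem_Ici.2 hz), max_eq_left (by positivity), neg_mul]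
    refine (exp_neg_le_one_sub_min_div_two (by positivity)).trans ?_
    have h1 := min_le_left (α * σ) 1
    have h2 := min_le_right (α * σ) 1
    have : c * min (α * σ) 1 ≤ min (α * (σ * (c * z))) 1 :=
      le_min (by nlinarith [mul_le_mul_of_nonneg_left hz (by positivity : 0 ≤ α * σ * c)])
        (by nlinarith)
    linarith
  · rw [Set.indicator_of_notMem (by simpa using hz), sub_zero, ← Real.exp_zero]
    exact Real.exp_le_exp.2 (mul_nonpos_of_nonpos_of_nonneg (by linarith) (le_max_right _ _))

lemma exists_integral_exp_neg_max_gaussianReal_le {α σ : ℝ} (hα : 0 < α) (hσ : 0 < σ) :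
    ∃ κ > 0, ∀ v : ℝ≥0, v ≠ 0 → (v : ℝ) ≤ 1 →
      ∫ x, Real.exp (-α * max (σ * x) 0) ∂gaussianReal 0 v ≤ 1 - κ * Real.sqrt v := by
  set q := (gaussianReal 0 1).real (Set.Ici 1)
  have hq : 0 < q := by
    refine ENNReal.toReal_pos (fun h => ?_) (measure_ne_top _ _)
    have := gaussianReal_absolutelyContinuous' 0 one_ne_zero h
    simp at this
  refine ⟨min (α * σ) 1 / 2 * q, by positivity, fun v hv hv1 => ?_⟩
  set c := Real.sqrt v
  have hc0 : 0 < c := Real.sqrt_pos.2 (by positivity)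
  have hc1 : c ≤ 1 := Real.sqrt_le_one.2 hv1
  set k := min (α * σ) 1 / 2 * c
  have hφ : Continuous fun x : ℝ => Real.exp (-α * max (σ * x) 0) := by fun_prop
  have hscale : gaussianReal 0 v = (gaussianReal 0 1).map (c * ·) := by
    rw [gaussianReal_map_const_mul, mul_zero, mul_one]
    congr
    ext
    simp [c, Real.sq_sqrt v.coe_nonneg]
  have hpt := exp_neg_mul_max_le_one_sub_indicator hα hσ hc0.le hc1
  calc ∫ x, Real.exp (-α * max (σ * x) 0) ∂gaussianReal 0 v
      = ∫ z, Real.exp (-α * max (σ * (c * z)) 0) ∂gaussianReal 0 1 := by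
        rw [hscale, integral_map (by fun_prop) hφ.aestronglyMeasurable]
    _ ≤ ∫ z, (1 - (Set.Ici 1).indicator (fun _ => k) z) ∂gaussianReal 0 1 := by
        refine integral_mono (Integrable.of_bound (by fun_prop) 1 (ae_of_all _ fun z => ?_))
          ((integrable_const 1).sub ((integrable_const k).indicator measurableSet_Ici)) hpt
        rw [Real.norm_of_nonneg (Real.exp_pos _).le, Real.exp_le_one_iff]
        exact mul_nonpos_of_nonpos_of_nonneg (by linarith) (le_max_right _ _)
    _ = 1 - min (α * σ) 1 / 2 * q * c := by
        rw [integral_sub (integrable_const 1) ((integrable_const k).indicator measurableSet_Ici),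
          integral_indicator_const k measurableSet_Ici]
        simp [k]
        ring

lemma mul_rpow_neg_one_sub_le_rpow_neg_sub {γ a : ℝ} (hγ0 : 0 ≤ γ) (hγ1 : γ ≤ 1) (ha : 0 < a) :
    γ * (a + 1) ^ (-(1 + γ)) ≤ a ^ (-γ) - (a + 1) ^ (-γ) := by
  have hb : 0 < a + 1 := by linarith
  have hbern : (a / (a + 1)) ^ γ ≤ 1 - γ / (a + 1) := by
    have h := rpow_one_add_le_one_add_mul_self (by
      linarith [inv_le_one_of_one_le₀ (by linarith : (1 : ℝ) ≤ a + 1)] : -1 ≤ -(a + 1)⁻¹) hγ0 hγ1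
    convert h using 2 <;> field_simp <;> ring
  have hsplit : (a + 1) ^ (-γ) = a ^ (-γ) * (a / (a + 1)) ^ γ := by
    rw [Real.div_rpow ha.le hb.le, Real.rpow_neg ha.le, Real.rpow_neg hb.le]
    field_simp
  have hpow : (a + 1) ^ (-(1 + γ)) = (a + 1) ^ (-γ) / (a + 1) := by
    rw [neg_add, Real.rpow_add hb, Real.rpow_neg_one, div_eq_mul_inv, mul_comm]
  have hmono : (a + 1) ^ (-γ) ≤ a ^ (-γ) :=
    Real.rpow_le_rpow_of_nonpos ha (by linarith) (by linarith)
  calc γ * (a + 1) ^ (-(1 + γ)) = (a + 1) ^ (-γ) * (γ / (a + 1)) := by rw [hpow]; ring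
    _ ≤ a ^ (-γ) * (γ / (a + 1)) := by gcongr
    _ ≤ a ^ (-γ) - (a + 1) ^ (-γ) := by
        rw [hsplit]
        nlinarith [mul_le_mul_of_nonneg_left hbern (Real.rpow_nonneg ha.le (-γ))]

lemma summable_exp_neg_mul_rpow {c δ : ℝ} (hc : 0 < c) (hδ : 0 < δ) :
    Summable fun n : ℕ => Real.exp (-(c * (n : ℝ) ^ δ)) := by
  refine summable_of_isBigO_nat (Real.summable_nat_rpow.2 (by norm_num : (-2 : ℝ) < -1)) ?_
  have hlim : Tendsto (fun n : ℕ => (n : ℝ) ^ δ) atTop atTop :=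
    (tendsto_rpow_atTop hδ).comp tendsto_natCast_atTop_atTop
  refine ((isLittleO_exp_neg_mul_rpow_atTop hc (-2 / δ)).comp_tendsto hlim).isBigO.congr'
    (Eventually.of_forall fun n => by simp [neg_mul]) (Eventually.of_forall fun n => ?_)
  simp only [Function.comp_apply]
  rw [← Real.rpow_mul n.cast_nonneg, mul_div_cancel₀ _ hδ.ne']

lemma tendsto_max_mul_sub_rpow_neg {b : ℝ → ℝ} (hb : Continuous b) (σ : ℝ) {γ : ℝ} (hγ : 0 < γ) :
    Tendsto (fun n : ℕ => max (σ * b ((n : ℝ) ^ (-γ)) - σ * b (((n : ℝ) + 1) ^ (-γ))) 0)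
      atTop (𝓝 0) := by
  have h : Tendsto (fun n : ℕ => (n : ℝ) ^ (-γ)) atTop (𝓝 0) :=
    (tendsto_rpow_neg_atTop hγ).comp tendsto_natCast_atTop_atTop
  have h' : Tendsto (fun n : ℕ => ((n : ℝ) + 1) ^ (-γ)) atTop (𝓝 0) :=
    (tendsto_rpow_neg_atTop hγ).comp (tendsto_atTop_add_const_right _ 1 tendsto_natCast_atTop_atTop)
  simpa using ((((hb.tendsto 0).comp h).const_mul σ).sub (((hb.tendsto 0).comp h').const_mul σ)).max
    (tendsto_const_nhds (x := (0 : ℝ)))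

lemma ae_summable_of_summable_integral_norm {X : Type*} [MeasurableSpace X] {μ : Measure X}
    {f : ℕ → X → ℝ} (hf : ∀ n, Integrable (f n) μ)
    (hs : Summable fun n => ∫ x, ‖f n x‖ ∂μ) : ∀ᵐ x ∂μ, Summable fun n => f n x := by
  refine (summable_norm_of_tsum_eLpNorm_ne_top le_rfl (fun n => (hf n).aestronglyMeasurable)
    ?_).mono fun x hx => hx.of_norm
  simp_rw [eLpNorm_one_eq_lintegral_enorm, ← ofReal_integral_norm_eq_lintegral_enorm (hf _)]
  rw [← ENNReal.ofReal_tsum_of_nonneg (fun n => integral_nonneg fun _ => norm_nonneg _) hs]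
  exact ENNReal.ofReal_ne_top

lemma Fin.prod_univ_sub_eq_prod_Icc {M : Type*} [CommMonoid M] (f : ℕ → M) (N : ℕ) :
    ∏ i : Fin N, f (N - i) = ∏ k ∈ Finset.Icc 1 N, f k := by
  rw [Fin.prod_univ_eq_prod_range (fun i => f (N - i)), Finset.range_eq_Ico,
    Finset.prod_Ico_reflect f 0 N.le_succ, Nat.add_sub_cancel_left, Nat.sub_zero,
    Finset.Ico_add_one_right_eq_Icc]

lemma Fin.sum_univ_sub_eq_sum_Icc {M : Type*} [AddCommMonoid M] (f : ℕ → M) (N : ℕ) :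
    ∑ i : Fin N, f (N - i) = ∑ k ∈ Finset.Icc 1 N, f k := by
  rw [Fin.sum_univ_eq_sum_range (fun i => f (N - i)), Finset.range_eq_Ico,
    Finset.sum_Ico_reflect f 0 N.le_succ, Nat.add_sub_cancel_left, Nat.sub_zero,
    Finset.Ico_add_one_right_eq_Icc]

namespace IsBrownianMotion

variable {Ω : Type*} [MeasurableSpace Ω] {μ : Measure Ω} {B : ℝ → Ω → ℝ}

lemma iIndepFun_sub (hB : IsBrownianMotion μ B) {s : ℕ → ℝ} (hs : ∀ k, 1 ≤ k → s (k + 1) < s k)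
    (hs0 : ∀ k, 0 ≤ s k) (N : ℕ) :
    iIndepFun (fun i : Fin N => fun ω => B (s (N - i)) ω - B (s (N - i + 1)) ω) μ := by
  -- the times `s (N + 1) < ⋯ < s 1`, continued strictly increasingly beyond `s 1`
  set t : ℕ → ℝ := fun i => if i ≤ N then s (N + 1 - i) else s 1 + (i - N : ℕ)
  have ht : StrictMono t := by
    refine strictMono_nat_of_lt_succ fun i => ?_
    rcases lt_trichotomy i N with hi | rfl | hi
    · simp only [t, if_pos hi.le, if_pos (Nat.succ_le_of_lt hi)]
      rw [show N + 1 - i = N - i + 1 by omega, show N + 1 - (i + 1) = N - i by omega]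
      exact hs _ (by omega)
    · simp [t]
    · simp only [t, if_neg (by omega : ¬ i ≤ N), if_neg (by omega : ¬ i + 1 ≤ N)]
      gcongr <;> omega
  convert hB.indep N t ht (by simp [t, hs0]) using 3 with i ω
  have hi := i.isLt
  simp only [t, if_pos (by omega : (i : ℕ) + 1 ≤ N), if_pos hi.le]
  congr 3 <;> omega

lemma integral_exp_mul_sum_eq_prod_mgf (hB : IsBrownianMotion μ B) {s : ℕ → ℝ}
    (hs : ∀ k, 1 ≤ k → s (k + 1) < s k) (hs0 : ∀ k, 0 ≤ s k) {φ : ℝ → ℝ} (hφ : Measurable φ)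
    {X : ℕ → Ω → ℝ} (hX : ∀ k ω, X k ω = φ (B (s k) ω - B (s (k + 1)) ω)) (t : ℝ) (N : ℕ) :
    ∫ ω, Real.exp (t * ∑ k ∈ Finset.Icc 1 N, X k ω) ∂μ = ∏ k ∈ Finset.Icc 1 N, mgf (X k) μ t := by
  have hind : iIndepFun (fun i : Fin N => X (N - i)) μ := by
    convert (hB.iIndepFun_sub hs hs0 N).comp (fun _ => φ) (fun _ => hφ) using 2 with i
    exact funext fun ω => hX _ ω
  have hXmeas : ∀ k, Measurable (X k) := fun k => by
    simp_rw [funext (hX k)]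
    exact hφ.comp ((hB.meas _).sub (hB.meas _))
  rw [← Fin.prod_univ_sub_eq_prod_Icc, ← hind.mgf_sum (fun i => hXmeas _)]
  simp only [mgf, Finset.sum_apply]
  congr with ω
  rw [Fin.sum_univ_sub_eq_sum_Icc (X · ω)]

lemma exists_mgf_max_mul_sub_le (hB : IsBrownianMotion μ B) {α σ : ℝ} (hα : 0 < α)
    (hσ : 0 < σ) : ∃ κ > 0, ∀ a b : ℝ, 0 ≤ a → a < b → b - a ≤ 1 →
      mgf (fun ω => max (σ * (B b ω - B a ω)) 0) μ (-α) ≤ Real.exp (-(κ * Real.sqrt (b - a))) := by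
  obtain ⟨κ, hκ, hgauss⟩ := exists_integral_exp_neg_max_gaussianReal_le hα hσ
  refine ⟨κ, hκ, fun a b ha hab hba => ?_⟩
  have hv : ((b - a).toNNReal : ℝ) = b - a := Real.coe_toNNReal _ (sub_nonneg.2 hab.le)
  calc mgf (fun ω => max (σ * (B b ω - B a ω)) 0) μ (-α)
      = ∫ x, Real.exp (-α * max (σ * x) 0) ∂gaussianReal 0 (b - a).toNNReal := by
        have hmeas := hB.meas
        rw [← hB.incr a b ha hab.le, integral_map (by fun_prop) (by fun_prop)]
        rfl
    _ ≤ 1 - κ * Real.sqrt (b - a) := by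
        have := hgauss _ (by simpa using hab) (hv ▸ hba)
        rwa [hv] at this
    _ ≤ Real.exp (-(κ * Real.sqrt (b - a))) := by
        linarith [Real.add_one_le_exp (-(κ * Real.sqrt (b - a)))]

lemma exists_mgf_le_exp_neg_rpow (hB : IsBrownianMotion μ B) {σ γ α : ℝ} (hσ : 0 < σ)
    (hγ : γ ∈ Set.Ioo (0 : ℝ) 1) {ξ : ℕ → Ω → ℝ}
    (hξ : ∀ n : ℕ, ∀ ω, ξ n ω =
      max (σ * B ((n : ℝ) ^ (-γ)) ω - σ * B (((n : ℝ) + 1) ^ (-γ)) ω) 0) (hα : 0 < α) :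
    ∃ c > 0, ∀ k : ℕ, 1 ≤ k →
      mgf (ξ k) μ (-α) ≤ Real.exp (-(c * ((k : ℝ) + 1) ^ (-((1 + γ) / 2)))) := by
  obtain ⟨κ, hκ, hmgf⟩ := hB.exists_mgf_max_mul_sub_le hα hσ
  refine ⟨κ * Real.sqrt γ, by have := Real.sqrt_pos.2 hγ.1; positivity, fun k hk => ?_⟩
  have hk1 : (1 : ℝ) ≤ k := by exact_mod_cast hk
  have hlt : ((k : ℝ) + 1) ^ (-γ) < (k : ℝ) ^ (-γ) :=
    Real.rpow_lt_rpow_of_neg (by positivity) (lt_add_one _) (by linarith [hγ.1])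
  have hle : (k : ℝ) ^ (-γ) - ((k : ℝ) + 1) ^ (-γ) ≤ 1 := by
    linarith [Real.rpow_le_one_of_one_le_of_nonpos hk1 (by linarith [hγ.1] : -γ ≤ 0),
      Real.rpow_nonneg (by positivity : (0 : ℝ) ≤ k + 1) (-γ)]
  have hsqrt : Real.sqrt γ * ((k : ℝ) + 1) ^ (-((1 + γ) / 2))
      ≤ Real.sqrt ((k : ℝ) ^ (-γ) - ((k : ℝ) + 1) ^ (-γ)) := by
    calc Real.sqrt γ * ((k : ℝ) + 1) ^ (-((1 + γ) / 2))
        = Real.sqrt (γ * ((k : ℝ) + 1) ^ (-(1 + γ))) := by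
          rw [Real.sqrt_mul hγ.1.le, Real.sqrt_eq_rpow (_ ^ _), ← Real.rpow_mul (by positivity)]
          ring_nf
      _ ≤ _ := Real.sqrt_le_sqrt
          (mul_rpow_neg_one_sub_le_rpow_neg_sub hγ.1.le hγ.2.le (by positivity))
  have hξk : ξ k = fun ω => max (σ * (B ((k : ℝ) ^ (-γ)) ω - B (((k : ℝ) + 1) ^ (-γ)) ω)) 0 :=
    funext fun ω => by rw [hξ, mul_sub]
  rw [hξk]
  refine (hmgf _ _ (Real.rpow_nonneg (by positivity) _) hlt hle).trans (Real.exp_le_exp.2 ?_)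
  rw [mul_assoc]
  exact neg_le_neg (mul_le_mul_of_nonneg_left hsqrt hκ.le)

lemma exists_integral_exp_neg_mul_sum_le (hB : IsBrownianMotion μ B) {σ γ α : ℝ} (hσ : 0 < σ)
    (hγ : γ ∈ Set.Ioo (0 : ℝ) 1) {ξ : ℕ → Ω → ℝ}
    (hξ : ∀ n : ℕ, ∀ ω, ξ n ω =
      max (σ * B ((n : ℝ) ^ (-γ)) ω - σ * B (((n : ℝ) + 1) ^ (-γ)) ω) 0) (hα : 0 < α) :
    ∃ c > 0, ∀ n : ℕ, ∫ ω, Real.exp (-α * ∑ k ∈ Finset.Icc 1 (n + 1), ξ k ω) ∂μ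
      ≤ Real.exp (-(c * ((n : ℝ) + 2) ^ ((1 - γ) / 2))) := by
  obtain ⟨c, hc, hmgf⟩ := hB.exists_mgf_le_exp_neg_rpow hσ hγ hξ hα
  refine ⟨c / 2, by positivity, fun n => ?_⟩
  have hs : ∀ k, 1 ≤ k → ((k + 1 : ℕ) : ℝ) ^ (-γ) < (k : ℝ) ^ (-γ) := fun k hk => by
    push_cast
    exact Real.rpow_lt_rpow_of_neg (by exact_mod_cast hk) (lt_add_one _) (by linarith [hγ.1])
  have hX : ∀ k ω, ξ k ω = max (σ * (B ((k : ℝ) ^ (-γ)) ω - B (((k + 1 : ℕ) : ℝ) ^ (-γ)) ω)) 0 :=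
    fun k ω => by rw [hξ, mul_sub]; push_cast; rfl
  have hterm : ∀ k ∈ Finset.Icc 1 (n + 1),
      mgf (ξ k) μ (-α) ≤ Real.exp (-(c * ((n : ℝ) + 2) ^ (-((1 + γ) / 2)))) := fun k hk => by
    obtain ⟨hk1, hkn⟩ := Finset.mem_Icc.1 hk
    refine (hmgf k hk1).trans (Real.exp_le_exp.2 (neg_le_neg (mul_le_mul_of_nonneg_left ?_ hc.le)))
    have : (k : ℝ) ≤ n + 1 := by exact_mod_cast hkn
    exact Real.rpow_le_rpow_of_nonpos (by positivity) (by linarith) (by linarith [hγ.1])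
  have hpow : ((n : ℝ) + 2) ^ ((1 - γ) / 2) = ((n : ℝ) + 2) * ((n : ℝ) + 2) ^ (-((1 + γ) / 2)) := by
    rw [mul_comm, ← Real.rpow_add_one (by positivity)]
    ring_nf
  have hq := Real.rpow_nonneg (by positivity : (0 : ℝ) ≤ n + 2) (-((1 + γ) / 2))
  calc ∫ ω, Real.exp (-α * ∑ k ∈ Finset.Icc 1 (n + 1), ξ k ω) ∂μ
      = ∏ k ∈ Finset.Icc 1 (n + 1), mgf (ξ k) μ (-α) :=
        hB.integral_exp_mul_sum_eq_prod_mgf hs (fun k => Real.rpow_nonneg k.cast_nonneg _)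
          (by fun_prop : Measurable fun x : ℝ => max (σ * x) 0) hX (-α) (n + 1)
    _ ≤ ∏ k ∈ Finset.Icc 1 (n + 1), Real.exp (-(c * ((n : ℝ) + 2) ^ (-((1 + γ) / 2)))) :=
        Finset.prod_le_prod (fun _ _ => mgf_nonneg) hterm
    _ = Real.exp (-((n + 1) * (c * ((n : ℝ) + 2) ^ (-((1 + γ) / 2))))) := by
        rw [Finset.prod_const, Nat.card_Icc, ← Real.exp_nat_mul]
        push_cast
        ring_nf
    _ ≤ Real.exp (-(c / 2 * ((n : ℝ) + 2) ^ ((1 - γ) / 2))) := by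
        rw [hpow]
        refine Real.exp_le_exp.2 (neg_le_neg ?_)
        nlinarith [mul_nonneg (mul_nonneg hc.le hq) n.cast_nonneg]

theorem ae_summable_exp_neg_mul_sum (hB : IsBrownianMotion μ B) {σ γ α : ℝ} (hσ : 0 < σ)
    (hγ : γ ∈ Set.Ioo (0 : ℝ) 1) {ξ : ℕ → Ω → ℝ}
    (hξ : ∀ n : ℕ, ∀ ω, ξ n ω =
      max (σ * B ((n : ℝ) ^ (-γ)) ω - σ * B (((n : ℝ) + 1) ^ (-γ)) ω) 0) (hα : 0 < α) :
    ∀ᵐ ω ∂μ, Summable fun n : ℕ => Real.exp (-α * ∑ k ∈ Finset.Icc 1 (n + 1), ξ k ω) := by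
  have := hB.isProb
  obtain ⟨c, hc, hint⟩ := hB.exists_integral_exp_neg_mul_sum_le hσ hγ hξ hα
  have hξmeas : ∀ k, Measurable (ξ k) := fun k => by
    have hmeas := hB.meas
    simp_rw [funext (hξ k)]
    fun_prop
  have hξ0 : ∀ k ω, 0 ≤ ξ k ω := fun k ω => (hξ k ω).symm ▸ le_max_right _ _
  have hδ : 0 < (1 - γ) / 2 := by linarith [hγ.2]
  refine ae_summable_of_summable_integral_norm (fun n => Integrable.of_bound (by fun_prop) 1
    (ae_of_all _ fun ω => ?_)) ?_
  · rw [Real.norm_of_nonneg (Real.exp_pos _).le, Real.exp_le_one_iff]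
    exact mul_nonpos_of_nonpos_of_nonneg (by linarith) (Finset.sum_nonneg fun k _ => hξ0 k ω)
  · simp_rw [Real.norm_of_nonneg (Real.exp_pos _).le]
    refine .of_nonneg_of_le (fun n => integral_nonneg fun _ => (Real.exp_pos _).le) hint ?_
    simpa using (summable_nat_add_iff 2).2 (summable_exp_neg_mul_rpow hc hδ)

end IsBrownianMotion

/-- Almost surely `∑ₙ exp (-α ∑_{k=1}^n ξ_k) < ∞`, and consequently, with
`H_n = ∏_{k=1}^n (1 + (2/3) ξ_k)⁻¹`, almost surely `∑ₙ H_n < ∞` and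
`H_n < ∑_{k=n+1}^∞ H_k ξ_k` for every `n ≥ 1`. -/
theorem brownian_verification {Ω : Type*} [MeasurableSpace Ω] (μ : Measure Ω)
    (B : ℝ → Ω → ℝ) (hB : IsBrownianMotion μ B)
    (σ : ℝ) (hσ : 0 < σ) (γ : ℝ) (hγ : γ ∈ Set.Ioo (0 : ℝ) 1)
    (ξ : ℕ → Ω → ℝ)
    (hξ : ∀ n : ℕ, ∀ ω, ξ n ω =
      max (σ * B ((n : ℝ) ^ (-γ)) ω - σ * B (((n : ℝ) + 1) ^ (-γ)) ω) 0)
    (α : ℝ) (hα : α ∈ Set.Ioo (0 : ℝ) 1)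
    (H : ℕ → Ω → ℝ)
    (hH : ∀ n : ℕ, ∀ ω, H n ω = ∏ k ∈ Finset.Icc 1 n, (1 + (2 / 3 : ℝ) * ξ k ω)⁻¹) :
    (∀ᵐ ω ∂μ, Summable fun n : ℕ =>
        Real.exp (-α * ∑ k ∈ Finset.Icc 1 (n + 1), ξ k ω)) ∧
    (∀ᵐ ω ∂μ, (Summable fun n : ℕ => H (n + 1) ω) ∧
      ∀ n : ℕ, 1 ≤ n →
        H n ω < ∑' k : ℕ, H (k + (n + 1)) ω * ξ (k + (n + 1)) ω) := by
  refine ⟨hB.ae_summable_exp_neg_mul_sum hσ hγ hξ hα.1, ?_⟩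
  filter_upwards [hB.ae_summable_exp_neg_mul_sum hσ hγ hξ (α := 1 / 2) (by norm_num)] with ω hω
  have hξ0 : Tendsto (fun n => ξ n ω) atTop (𝓝 0) := by
    simpa only [hξ] using tendsto_max_mul_sub_rpow_neg (hB.cont ω) σ hγ.1
  obtain ⟨hsum, hlt⟩ := summable_and_lt_tsum_of_summable_exp
    (fun k => (hξ k ω).symm ▸ le_max_right _ _) hξ0 hω (hH · ω)
  exact ⟨hsum, fun n _ => hlt n⟩
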